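/- Let A be an epsilon-strongly G-graded ring and R = A_1. Then A is an epsilon-crossed product if and only if there exists a map κ : G → A such that κ(g) ∈ A_g and Rκ(g) = A_g = κ(g)R for all g ∈ G, where Rκ(g) = {rκ(g) : r ∈ R} and κ(g)R = {κ(g)r : r ∈ R}. -/
import Mathlib


/-- A `G`-grading on a unital ring `A`: a family of additive subgroups with
`A_g A_h ⊆ A_{gh}`, `1 ∈ A₁`, whose internal direct sum is `A`. -/
structure RingGrading (G : Type*) [Group G] [DecidableEq G]
    (A : Type*) [Ring A] where
  comp : G → AddSubgroup A
  one_mem : (1 : A) ∈ comp 1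
  mul_mem : ∀ ⦃g h : G⦄ ⦃a b : A⦄, a ∈ comp g → b ∈ comp h → a * b ∈ comp (g * h)
  isInternal : DirectSum.IsInternal comp

variable {G : Type*} [Group G] [DecidableEq G] {A : Type*} [Ring A]

/-- The additive subgroup `S T` generated by products of elements of `S` and `T`. -/
def sgMul (S T : AddSubgroup A) : AddSubgroup A :=
  AddSubgroup.closure {x : A | ∃ s ∈ S, ∃ t ∈ T, x = s * t}

/-- `ε` is a family of epsilon-elements for the grading `𝒜`:
`ε_g ∈ A_g A_{g⁻¹}` and `ε_g a = a = a ε_{g⁻¹}` for all `a ∈ A_g`. -/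
structure IsEpsilonFamily (𝒜 : RingGrading G A) (ε : G → A) : Prop where
  mem : ∀ g : G, ε g ∈ sgMul (𝒜.comp g) (𝒜.comp g⁻¹)
  mul_left : ∀ g : G, ∀ a ∈ 𝒜.comp g, ε g * a = a
  mul_right : ∀ g : G, ∀ a ∈ 𝒜.comp g, a * ε g⁻¹ = a

/-- `𝒜` is an epsilon-strongly graded ring. -/
def IsEpsilonStrong (𝒜 : RingGrading G A) : Prop :=
  ∃ ε : G → A, IsEpsilonFamily 𝒜 ε

/-- `𝒜` is an epsilon-crossed product: it is epsilon-strongly graded and each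
homogeneous component contains an epsilon-invertible element. -/
def IsEpsilonCrossedProduct (𝒜 : RingGrading G A) : Prop :=
  ∃ ε : G → A, IsEpsilonFamily 𝒜 ε ∧
    ∀ g : G, ∃ a ∈ 𝒜.comp g, ∃ b ∈ 𝒜.comp g⁻¹, a * b = ε g ∧ b * a = ε g⁻¹

/-- An epsilon-strongly graded ring `A` is an epsilon-crossed
product iff there is a map `κ : G → A` with `κ(g) ∈ A_g` and
`Rκ(g) = A_g = κ(g)R` for all `g ∈ G` (where `R = A₁`). -/
theorem epsilonCrossedProduct_iff_kappa (𝒜 : RingGrading G A)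
    (h : IsEpsilonStrong 𝒜) :
    IsEpsilonCrossedProduct 𝒜 ↔
      ∃ κ : G → A, ∀ g : G, κ g ∈ 𝒜.comp g ∧
        {y : A | ∃ r ∈ 𝒜.comp 1, y = r * κ g} = (𝒜.comp g : Set A) ∧
        {y : A | ∃ r ∈ 𝒜.comp 1, y = κ g * r} = (𝒜.comp g : Set A) := by
  obtain ⟨ε, hε⟩ := h
  constructor
  · rintro ⟨ε', hε', hinv⟩
    choose a ha b hb hab hba using hinv
    refine ⟨a, fun g => ⟨ha g, ?_, ?_⟩⟩
    · ext x
      simp only [Set.mem_setOf_eq, SetLike.mem_coe]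
      constructor
      · rintro ⟨r, hr, rfl⟩
        simpa using 𝒜.mul_mem hr (ha g)
      · intro hx
        refine ⟨x * b g, by simpa using 𝒜.mul_mem hx (hb g), ?_⟩
        rw [mul_assoc, hba g, hε'.mul_right g x hx]
    · ext x
      simp only [Set.mem_setOf_eq, SetLike.mem_coe]
      constructor
      · rintro ⟨r, hr, rfl⟩
        simpa using 𝒜.mul_mem (ha g) hr
      · intro hx
        refine ⟨b g * x, by simpa using 𝒜.mul_mem (hb g) hx, ?_⟩
        rw [← mul_assoc, hab g, hε'.mul_left g x hx]
  · rintro ⟨κ, hκ⟩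
    have key1 : ∀ g : G, ∃ s ∈ 𝒜.comp g⁻¹, ε g = κ g * s := by
      intro g
      have hsub : sgMul (𝒜.comp g) (𝒜.comp g⁻¹) ≤
          (𝒜.comp g⁻¹).map (AddMonoidHom.mulLeft (κ g)) := by
        rw [sgMul, AddSubgroup.closure_le]
        rintro x ⟨u, hu, v, hv, rfl⟩
        have hu' : u ∈ {y : A | ∃ r ∈ 𝒜.comp 1, y = κ g * r} := by
          rw [(hκ g).2.2]; exact hu
        obtain ⟨r, hr, rfl⟩ := hu'
        exact ⟨r * v, by simpa using 𝒜.mul_mem hr hv, (mul_assoc _ _ _).symm⟩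
      obtain ⟨s, hs, hs'⟩ := hsub (hε.mem g)
      exact ⟨s, hs, hs'.symm⟩
    have key2 : ∀ g : G, ∃ p ∈ 𝒜.comp g⁻¹, ε g⁻¹ = p * κ g := by
      intro g
      have hmem := hε.mem g⁻¹
      rw [inv_inv] at hmem
      have hsub : sgMul (𝒜.comp g⁻¹) (𝒜.comp g) ≤
          (𝒜.comp g⁻¹).map (AddMonoidHom.mulRight (κ g)) := by
        rw [sgMul, AddSubgroup.closure_le]
        rintro x ⟨u, hu, v, hv, rfl⟩
        have hv' : v ∈ {y : A | ∃ r ∈ 𝒜.comp 1, y = r * κ g} := by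
          rw [(hκ g).2.1]; exact hv
        obtain ⟨r, hr, rfl⟩ := hv'
        exact ⟨u * r, by simpa using 𝒜.mul_mem hu hr, mul_assoc _ _ _⟩
      obtain ⟨p, hp, hp'⟩ := hsub hmem
      exact ⟨p, hp, hp'.symm⟩
    refine ⟨ε, hε, fun g => ?_⟩
    obtain ⟨s, hs, hεs⟩ := key1 g
    obtain ⟨p, hp, hεp⟩ := key2 g
    have hsp : s = p := by
      have h1 : p * ε g = p := by
        have := hε.mul_right g⁻¹ p hp
        rwa [inv_inv] at this
      have h2 : ε g⁻¹ * s = s := hε.mul_left g⁻¹ s hs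
      calc s = ε g⁻¹ * s := h2.symm
        _ = (p * κ g) * s := by rw [hεp]
        _ = p * (κ g * s) := mul_assoc _ _ _
        _ = p * ε g := by rw [hεs]
        _ = p := h1
    exact ⟨κ g, (hκ g).1, s, hs, hεs.symm, by rw [hsp, ← hεp]⟩
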